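/- For any real parameter d and any U ∈ SU(2), the quantum symmetric-profile payoff v(U) = |⟨Ψ00|U⊗U|Ψ⟩|² + d·(|⟨Ψ01|U⊗U|Ψ⟩|² + |⟨Ψ10|U⊗U|Ψ⟩|²)/2·2 satisfies: if d ≤ 2 then sup_U v(U) = 1, and if d > 2 then sup_U v(U) = d/2, and this is at least the classical maximum max_{p∈[0,1]} (p² + d·p(1-p)), with strict inequality when d > 2. -/

import Mathlib

/-- The maximally entangled state |Ψ⟩ = (|00⟩ + i|11⟩)/√2 as amplitudes. -/
noncomputable def PsiState : Fin 2 → Fin 2 → ℂ := fun k l =>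
  if k = 0 ∧ l = 0 then ((Real.sqrt 2)⁻¹ : ℝ)
  else if k = 1 ∧ l = 1 then Complex.I * ((Real.sqrt 2)⁻¹ : ℝ)
  else 0

/-- The EWL strategy U(θ,α,β). -/
noncomputable def EWLU (θ α β : ℝ) : Matrix (Fin 2) (Fin 2) ℂ :=
  !![Complex.exp (Complex.I * α) * Real.cos (θ/2),
     Complex.I * Complex.exp (Complex.I * β) * Real.sin (θ/2);
     Complex.I * Complex.exp (-(Complex.I * β)) * Real.sin (θ/2),
     Complex.exp (-(Complex.I * α)) * Real.cos (θ/2)]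

/-- Action of A ⊗ B on a two-qubit state. -/
noncomputable def tensorApply (A B : Matrix (Fin 2) (Fin 2) ℂ)
    (ψ : Fin 2 → Fin 2 → ℂ) : Fin 2 → Fin 2 → ℂ :=
  fun k l => ∑ k' : Fin 2, ∑ l' : Fin 2, A k k' * B l l' * ψ k' l'

/-- Inner product ⟨φ|ψ⟩ on ℂ²⊗ℂ². -/
noncomputable def inner2 (φ ψ : Fin 2 → Fin 2 → ℂ) : ℂ :=
  ∑ k : Fin 2, ∑ l : Fin 2, (starRingEnd ℂ) (φ k l) * ψ k l

/-- C₀ = I, C₁ = [[0,i],[i,0]]. -/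
noncomputable def Cop : Fin 2 → Matrix (Fin 2) (Fin 2) ℂ := fun k =>
  if k = 0 then 1 else !![0, Complex.I; Complex.I, 0]

/-- The basis states |Ψ_kl⟩ = (C_k ⊗ C_l)|Ψ⟩. -/
noncomputable def PsiBasis (k l : Fin 2) : Fin 2 → Fin 2 → ℂ :=
  tensorApply (Cop k) (Cop l) PsiState

/-- Quantum symmetric-profile payoff for the normalized game with parameter d. -/
noncomputable def vPay (d : ℝ) (U : Matrix (Fin 2) (Fin 2) ℂ) : ℝ :=
  ‖inner2 (PsiBasis 0 0) (tensorApply U U PsiState)‖ ^ 2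
    + d * (‖inner2 (PsiBasis 0 1) (tensorApply U U PsiState)‖ ^ 2
        + ‖inner2 (PsiBasis 1 0) (tensorApply U U PsiState)‖ ^ 2) / 2

/-!
Every `U ∈ SU(2)` is a Cayley–Klein matrix `!![a, b; -conj b, conj a]` with `|a|² + |b|² = 1`.
Writing `z = a² + i b²`, a direct computation gives `⟨Ψ00|U⊗U|Ψ⟩ = Re z` and
`⟨Ψ01|U⊗U|Ψ⟩ = ⟨Ψ10|U⊗U|Ψ⟩ = -(1 + i)/2 · w` for `w = i b ā - a b̄`, and
`|w|² + |z|² = (|a|² + |b|²)² = 1`, so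
`v(U) = (Re z)² + d (1 - |z|²)/2 ≤ |z|² · 1 + (1 - |z|²) · d/2 ≤ max 1 (d/2)`.
The bound is attained at `z = 1` (`U = 1`) and at `z = 0`.
-/

open Complex ComplexConjugate

def cayleyKlein (a b : ℂ) : Matrix (Fin 2) (Fin 2) ℂ := !![a, b; -conj b, conj a]

lemma cayleyKlein_mem_specialUnitaryGroup {a b : ℂ} (h : normSq a + normSq b = 1) :
    cayleyKlein a b ∈ Matrix.specialUnitaryGroup (Fin 2) ℂ := by
  have h' : a * conj a + b * conj b = 1 := by
    rw [mul_conj, mul_conj]; exact_mod_cast h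
  refine Matrix.mem_specialUnitaryGroup_iff.mpr ⟨Matrix.mem_unitaryGroup_iff.mpr ?_, ?_⟩
  · ext i j
    fin_cases i <;> fin_cases j <;>
      simp [cayleyKlein, Matrix.mul_apply, Fin.sum_univ_two, Matrix.star_apply] <;>
      first | linear_combination h' | ring
  · simpa [cayleyKlein, Matrix.det_fin_two] using h'

lemma eq_cayleyKlein_of_mem_specialUnitaryGroup {U : Matrix (Fin 2) (Fin 2) ℂ}
    (hU : U ∈ Matrix.specialUnitaryGroup (Fin 2) ℂ) :
    U = cayleyKlein (U 0 0) (U 0 1) := by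
  obtain ⟨hu, hdet⟩ := Matrix.mem_specialUnitaryGroup_iff.mp hU
  have hstar : star U = U.adjugate := by
    calc star U = U.adjugate * U * star U := by
          rw [Matrix.adjugate_mul, hdet, one_smul, Matrix.one_mul]
      _ = U.adjugate := by rw [Matrix.mul_assoc, Matrix.mem_unitaryGroup_iff.mp hu, Matrix.mul_one]
  have h00 : conj (U 0 0) = U 1 1 := by simpa [Matrix.adjugate_fin_two] using congrFun₂ hstar 0 0
  have h10 : conj (U 0 1) = -U 1 0 := by simpa [Matrix.adjugate_fin_two] using congrFun₂ hstar 1 0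
  ext i j
  fin_cases i <;> fin_cases j <;> simp [cayleyKlein, h00, h10]

theorem mem_specialUnitaryGroup_fin_two_iff {U : Matrix (Fin 2) (Fin 2) ℂ} :
    U ∈ Matrix.specialUnitaryGroup (Fin 2) ℂ ↔
      ∃ a b : ℂ, normSq a + normSq b = 1 ∧ U = cayleyKlein a b := by
  refine ⟨fun hU => ⟨U 0 0, U 0 1, ?_, eq_cayleyKlein_of_mem_specialUnitaryGroup hU⟩, ?_⟩
  · have hdet := (Matrix.mem_specialUnitaryGroup_iff.mp hU).2
    rw [eq_cayleyKlein_of_mem_specialUnitaryGroup hU, cayleyKlein, Matrix.det_fin_two_of] at hdet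
    simpa [normSq_apply] using congrArg re hdet
  · rintro ⟨a, b, h, rfl⟩
    exact cayleyKlein_mem_specialUnitaryGroup h

lemma inv_ofReal_sqrt_two_sq : ((√2 : ℝ) : ℂ)⁻¹ ^ 2 = 1 / 2 := by
  rw [inv_pow, ← ofReal_pow, Real.sq_sqrt zero_le_two]; norm_num

lemma inner2_PsiBasis_zero_zero_cayleyKlein (a b : ℂ) :
    inner2 (PsiBasis 0 0) (tensorApply (cayleyKlein a b) (cayleyKlein a b) PsiState)
      = ((a ^ 2 + I * b ^ 2).re : ℂ) := by
  have hre := add_conj (a ^ 2 + I * b ^ 2)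
  simp only [map_add, map_mul, map_pow, conj_I] at hre
  have hinner : inner2 (PsiBasis 0 0) (tensorApply (cayleyKlein a b) (cayleyKlein a b) PsiState)
      = (a ^ 2 + I * b ^ 2 + (conj a ^ 2 + -I * conj b ^ 2)) / 2 := by
    simp [inner2, PsiBasis, tensorApply, PsiState, Cop, cayleyKlein, Fin.sum_univ_two]
    ring_nf
    simp only [I_sq, inv_ofReal_sqrt_two_sq]
    ring
  rw [hinner, hre]
  push_cast
  ring

lemma inner2_PsiBasis_cayleyKlein_of_ne {k l : Fin 2} (hkl : k ≠ l) (a b : ℂ) :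
    inner2 (PsiBasis k l) (tensorApply (cayleyKlein a b) (cayleyKlein a b) PsiState)
      = -(1 + I) / 2 * (I * b * conj a - a * conj b) := by
  fin_cases k <;> fin_cases l <;> simp only [ne_eq, not_true_eq_false] at hkl <;>
  · simp [inner2, PsiBasis, tensorApply, PsiState, Cop, cayleyKlein, Fin.sum_univ_two]
    ring_nf
    simp only [I_sq, I_pow_three, inv_ofReal_sqrt_two_sq]
    ring

lemma normSq_add_normSq_eq_sq (a b : ℂ) :
    normSq (I * b * conj a - a * conj b) + normSq (a ^ 2 + I * b ^ 2)
      = (normSq a + normSq b) ^ 2 := by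
  simp only [normSq_apply, mul_re, mul_im, add_re, add_im, sub_re, sub_im, conj_re, conj_im,
    I_re, I_im, pow_two]
  ring

lemma vPay_cayleyKlein (d : ℝ) {a b : ℂ} (h : normSq a + normSq b = 1) :
    vPay d (cayleyKlein a b)
      = (a ^ 2 + I * b ^ 2).re ^ 2 + d * (1 - normSq (a ^ 2 + I * b ^ 2)) / 2 := by
  have hcross : ‖-(1 + I) / 2 * (I * b * conj a - a * conj b)‖ ^ 2
      = normSq (I * b * conj a - a * conj b) / 2 := by
    rw [Complex.sq_norm, normSq_mul, normSq_div, normSq_neg]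
    norm_num [normSq_apply]
    ring
  have hsum := normSq_add_normSq_eq_sq a b
  rw [h, one_pow] at hsum
  rw [vPay, inner2_PsiBasis_zero_zero_cayleyKlein, inner2_PsiBasis_cayleyKlein_of_ne zero_ne_one,
    inner2_PsiBasis_cayleyKlein_of_ne one_ne_zero, hcross, norm_real, Real.norm_eq_abs, sq_abs]
  linear_combination (d / 2) * hsum

theorem vPay_le_max (d : ℝ) {U : Matrix (Fin 2) (Fin 2) ℂ}
    (hU : U ∈ Matrix.specialUnitaryGroup (Fin 2) ℂ) : vPay d U ≤ max 1 (d / 2) := by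
  obtain ⟨a, b, h, rfl⟩ := mem_specialUnitaryGroup_fin_two_iff.mp hU
  rw [vPay_cayleyKlein d h]
  set z := a ^ 2 + I * b ^ 2
  have hz : normSq z ≤ 1 := by
    have := normSq_add_normSq_eq_sq a b
    rw [h, one_pow] at this
    linarith [normSq_nonneg (I * b * conj a - a * conj b)]
  calc z.re ^ 2 + d * (1 - normSq z) / 2 ≤ normSq z * 1 + (1 - normSq z) * (d / 2) := by
        nlinarith [re_sq_le_normSq z]
    _ ≤ normSq z * max 1 (d / 2) + (1 - normSq z) * max 1 (d / 2) := by
        gcongr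
        · exact normSq_nonneg z
        · exact le_max_left 1 (d / 2)
        · exact le_max_right 1 (d / 2)
    _ = max 1 (d / 2) := by ring

lemma exists_vPay_eq_one (d : ℝ) :
    ∃ U ∈ Matrix.specialUnitaryGroup (Fin 2) ℂ, vPay d U = 1 := by
  have hn : normSq 1 + normSq 0 = 1 := by simp
  refine ⟨cayleyKlein 1 0, cayleyKlein_mem_specialUnitaryGroup hn, ?_⟩
  rw [vPay_cayleyKlein d hn]
  simp

lemma exists_vPay_eq_half (d : ℝ) :
    ∃ U ∈ Matrix.specialUnitaryGroup (Fin 2) ℂ, vPay d U = d / 2 := by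
  have hn : normSq ((1 - I) / 2) + normSq ((√2 : ℝ) : ℂ)⁻¹ = 1 := by
    norm_num [normSq_apply]
  have hz : ((1 - I) / 2) ^ 2 + I * ((√2 : ℝ) : ℂ)⁻¹ ^ 2 = 0 := by
    rw [inv_ofReal_sqrt_two_sq]
    linear_combination (1 / 4) * I_sq
  refine ⟨_, cayleyKlein_mem_specialUnitaryGroup hn, ?_⟩
  rw [vPay_cayleyKlein d hn, hz]
  simp

theorem isGreatest_vPay (d : ℝ) :
    IsGreatest {x : ℝ | ∃ U ∈ Matrix.specialUnitaryGroup (Fin 2) ℂ, x = vPay d U}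
      (max 1 (d / 2)) := by
  refine ⟨?_, fun x ⟨U, hU, hx⟩ => hx ▸ vPay_le_max d hU⟩
  obtain ⟨U, hU, hv⟩ : ∃ U ∈ Matrix.specialUnitaryGroup (Fin 2) ℂ, vPay d U = max 1 (d / 2) := by
    rcases max_choice 1 (d / 2) with h | h <;> rw [h]
    exacts [exists_vPay_eq_one d, exists_vPay_eq_half d]
  exact ⟨U, hU, hv.symm⟩

lemma classical_payoff_le_one {d p : ℝ} (hd : d ≤ 2) (hp : p ∈ Set.Icc (0 : ℝ) 1) :
    p ^ 2 + d * p * (1 - p) ≤ 1 := by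
  nlinarith [mul_nonneg (mul_nonneg (sub_nonneg.2 hd) hp.1) (sub_nonneg.2 hp.2),
    sq_nonneg (1 - p)]

-- 4 (d - 1) (d / 2 - p² - d p (1 - p)) = (2 (d - 1) p - d)² + d (d - 2)
lemma classical_payoff_lt_half {d : ℝ} (hd : 2 < d) (p : ℝ) :
    p ^ 2 + d * p * (1 - p) < d / 2 := by
  nlinarith [sq_nonneg (2 * (d - 1) * p - d), mul_pos (by linarith : (0 : ℝ) < d) (sub_pos.2 hd)]

theorem stmt_19 (d : ℝ) :
    (d ≤ 2 → IsGreatest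
      {x : ℝ | ∃ U ∈ Matrix.specialUnitaryGroup (Fin 2) ℂ, x = vPay d U} 1) ∧
    (2 < d → IsGreatest
      {x : ℝ | ∃ U ∈ Matrix.specialUnitaryGroup (Fin 2) ℂ, x = vPay d U} (d/2)) ∧
    (∀ p ∈ Set.Icc (0:ℝ) 1,
      p^2 + d * p * (1 - p) ≤ if d ≤ 2 then 1 else d/2) ∧
    (2 < d → ∀ p ∈ Set.Icc (0:ℝ) 1, p^2 + d * p * (1 - p) < d/2) := by
  refine ⟨fun hd => ?_, fun hd => ?_, fun p hp => ?_, fun hd p _ => classical_payoff_lt_half hd p⟩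
  · simpa [max_eq_left (by linarith : d / 2 ≤ 1)] using isGreatest_vPay d
  · simpa [max_eq_right (by linarith : 1 ≤ d / 2)] using isGreatest_vPay d
  · split_ifs with hd
    · exact classical_payoff_le_one hd hp
    · exact (classical_payoff_lt_half (not_le.mp hd) p).le
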